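/- (The coinvariants form a subring.) Let (A,C)_ψ be an entwining structure and let g = Σ_j a_j ⊗ c_j ∈ A ⊗ C be a grouplike element. Then the set B := { b ∈ A | act(g ⊗ b) = Σ_j (b a_j) ⊗ c_j } (i.e. the set of b ∈ A such that the twisted right action of b on g equals left multiplication of g by b) is a k-subalgebra of A: it contains 1, and is closed under addition, multiplication, and scalar multiplication by k. -/
import Mathlib


/-!
STATEMENT 14: For an entwining structure (A,C)_ψ with a grouplike element
g ∈ A ⊗ C, the set of coinvariants
B = { b ∈ A | act(g ⊗ b) = b·g } is a k-subalgebra of A.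
-/

open TensorProduct

noncomputable section

variable {k A C : Type*} [CommRing k] [Ring A] [Algebra k A]
  [AddCommGroup C] [Module k C] [Coalgebra k C]

/-- The twisted right action `act((a' ⊗ c) ⊗ a) = (μ ⊗ C)(a' ⊗ ψ(c ⊗ a))`. -/
def act (ψ : C ⊗[k] A →ₗ[k] A ⊗[k] C) :
    (A ⊗[k] C) ⊗[k] A →ₗ[k] A ⊗[k] C :=
  LinearMap.rTensor C (LinearMap.mul' k A) ∘ₗ
    (TensorProduct.assoc k A A C).symm.toLinearMap ∘ₗ
    LinearMap.lTensor A ψ ∘ₗ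
    (TensorProduct.assoc k A C A).toLinearMap

/-- `(A ⊗ ε) : A ⊗ C → A` (composed with the canonical iso `A ⊗ k ≅ A`). -/
def epsA : A ⊗[k] C →ₗ[k] A :=
  (TensorProduct.rid k A).toLinearMap ∘ₗ
    LinearMap.lTensor A (Coalgebra.counit (R := k) (A := C))

/-- Left multiplication by `a` on the first tensor factor of `A ⊗ C`. -/
def lmul (a : A) : A ⊗[k] C →ₗ[k] A ⊗[k] C :=
  LinearMap.rTensor C (LinearMap.mulLeft k a)

/-- The coaction `ρ_A : A → A ⊗ C`, `a ↦ act(g ⊗ a)`. -/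
def rhoA (ψ : C ⊗[k] A →ₗ[k] A ⊗[k] C) (g : A ⊗[k] C) :
    A →ₗ[k] A ⊗[k] C :=
  act ψ ∘ₗ TensorProduct.mk k (A ⊗[k] C) A g

lemma lmul_add' (b b' : A) (x : A ⊗[k] C) :
    lmul (b + b') x = lmul b x + lmul b' x := by
  induction x using TensorProduct.induction_on with
  | zero => simp [lmul]
  | tmul a c => simp [lmul, add_mul, add_tmul]
  | add x y hx hy => simp only [map_add]; rw [hx, hy]; abel

lemma lmul_smul' (s : k) (b : A) (x : A ⊗[k] C) :
    lmul (s • b) x = s • lmul b x := by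
  induction x using TensorProduct.induction_on with
  | zero => simp [lmul]
  | tmul a c => simp [lmul, smul_mul_assoc, smul_tmul']
  | add x y hx hy => simp only [map_add]; rw [hx, hy, smul_add]

lemma lmul_one' (x : A ⊗[k] C) : lmul (1 : A) x = x := by
  simp [lmul]

lemma lmul_mul' (b b' : A) (x : A ⊗[k] C) :
    lmul (b * b') x = lmul b (lmul b' x) := by
  simp [lmul, ← LinearMap.comp_apply, ← LinearMap.rTensor_comp,
    LinearMap.mulLeft_mul]

lemma act_tmul (ψ : C ⊗[k] A →ₗ[k] A ⊗[k] C) (a' : A) (c : C) (a : A) :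
    act ψ ((a' ⊗ₜ c) ⊗ₜ a) = lmul a' (ψ (c ⊗ₜ a)) := by
  simp only [act, lmul, LinearMap.comp_apply, LinearEquiv.coe_coe,
    TensorProduct.assoc_tmul, LinearMap.lTensor_tmul]
  induction ψ (c ⊗ₜ a) using TensorProduct.induction_on with
  | zero => simp
  | tmul x y => simp [LinearMap.mul'_apply]
  | add x y hx hy => simp [tmul_add, hx, hy]

lemma act_lmul (ψ : C ⊗[k] A →ₗ[k] A ⊗[k] C) (b : A) (x : A ⊗[k] C) (a : A) :
    act ψ (lmul b x ⊗ₜ a) = lmul b (act ψ (x ⊗ₜ a)) := by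
  induction x using TensorProduct.induction_on with
  | zero => simp [lmul]
  | tmul a' c =>
      have h : lmul b (a' ⊗ₜ c : A ⊗[k] C) = (b * a') ⊗ₜ c := by simp [lmul]
      rw [h, act_tmul, act_tmul, lmul_mul']
  | add x y hx hy =>
      simp only [map_add, add_tmul] at *
      rw [hx, hy]

lemma act_mul (ψ : C ⊗[k] A →ₗ[k] A ⊗[k] C)
    (hmul : ∀ (c : C) (a b : A), ψ (c ⊗ₜ (a * b)) = act ψ (ψ (c ⊗ₜ a) ⊗ₜ b))
    (x : A ⊗[k] C) (a b : A) :
    act ψ (x ⊗ₜ (a * b)) = act ψ (act ψ (x ⊗ₜ a) ⊗ₜ b) := by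
  induction x using TensorProduct.induction_on with
  | zero => simp
  | tmul a' c => rw [act_tmul, act_tmul, hmul, act_lmul]
  | add x y hx hy => simp only [add_tmul, map_add] at *; rw [hx, hy]

lemma act_one' (ψ : C ⊗[k] A →ₗ[k] A ⊗[k] C)
    (hone : ∀ c : C, ψ (c ⊗ₜ (1 : A)) = (1 : A) ⊗ₜ c) (x : A ⊗[k] C) :
    act ψ (x ⊗ₜ 1) = x := by
  induction x using TensorProduct.induction_on with
  | zero => simp
  | tmul a c => rw [act_tmul, hone]; simp [lmul]
  | add x y hx hy => rw [add_tmul, map_add, hx, hy]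

theorem statement14 (ψ : C ⊗[k] A →ₗ[k] A ⊗[k] C)
    -- (i) ψ ∘ (C ⊗ μ) = (μ ⊗ C) ∘ (A ⊗ ψ) ∘ (ψ ⊗ A)
    (hmul : ∀ (c : C) (a b : A), ψ (c ⊗ₜ (a * b)) = act ψ (ψ (c ⊗ₜ a) ⊗ₜ b))
    -- (ii) (A ⊗ Δ) ∘ ψ = (ψ ⊗ C) ∘ (C ⊗ ψ) ∘ (Δ ⊗ A)
    (hcomul : LinearMap.lTensor A (Coalgebra.comul (R := k) (A := C)) ∘ₗ ψ =
      (TensorProduct.assoc k A C C).toLinearMap ∘ₗ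
        LinearMap.rTensor C ψ ∘ₗ
        (TensorProduct.assoc k C A C).symm.toLinearMap ∘ₗ
        LinearMap.lTensor C ψ ∘ₗ
        (TensorProduct.assoc k C C A).toLinearMap ∘ₗ
        LinearMap.rTensor A (Coalgebra.comul (R := k) (A := C)))
    -- (iii) ψ(c ⊗ 1) = 1 ⊗ c
    (hone : ∀ c : C, ψ (c ⊗ₜ (1 : A)) = (1 : A) ⊗ₜ c)
    -- (iv) (A ⊗ ε)(ψ(c ⊗ a)) = ε(c)a
    (hcounit : ∀ (c : C) (a : A),
      epsA (ψ (c ⊗ₜ a)) = Coalgebra.counit (R := k) c • a)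
    -- g is a grouplike element:
    (g : A ⊗[k] C)
    (hgcounit : epsA g = 1)
    (hgcomul : LinearMap.lTensor A (Coalgebra.comul (R := k) (A := C)) g =
      (TensorProduct.assoc k A C C)
        (LinearMap.rTensor C (rhoA ψ g) g)) :
    -- B = { b ∈ A | act(g ⊗ b) = b·g } is a k-subalgebra of A:
    ((1 : A) ∈ {b : A | act ψ (g ⊗ₜ b) = lmul b g}) ∧
    (∀ b b' : A, b ∈ {b : A | act ψ (g ⊗ₜ b) = lmul b g} →
      b' ∈ {b : A | act ψ (g ⊗ₜ b) = lmul b g} →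
      b + b' ∈ {b : A | act ψ (g ⊗ₜ b) = lmul b g}) ∧
    (∀ b b' : A, b ∈ {b : A | act ψ (g ⊗ₜ b) = lmul b g} →
      b' ∈ {b : A | act ψ (g ⊗ₜ b) = lmul b g} →
      b * b' ∈ {b : A | act ψ (g ⊗ₜ b) = lmul b g}) ∧
    (∀ (s : k) (b : A), b ∈ {b : A | act ψ (g ⊗ₜ b) = lmul b g} →
      s • b ∈ {b : A | act ψ (g ⊗ₜ b) = lmul b g}) := by
  refine ⟨?_, ?_, ?_, ?_⟩
  · show act ψ (g ⊗ₜ 1) = lmul 1 g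
    rw [lmul_one', act_one' ψ hone]
  · intro b b' hb hb'
    show act ψ (g ⊗ₜ (b + b')) = lmul (b + b') g
    rw [tmul_add, map_add, hb, hb', lmul_add']
  · intro b b' hb hb'
    show act ψ (g ⊗ₜ (b * b')) = lmul (b * b') g
    rw [act_mul ψ hmul, hb, act_lmul, hb', ← lmul_mul']
  · intro s b hb
    show act ψ (g ⊗ₜ (s • b)) = lmul (s • b) g
    rw [tmul_smul, map_smul, hb, lmul_smul']
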